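/- Let R be a commutative ring and A an R-algebra which is Azumaya over R: A is a faithful finitely generated projective R-module and the natural R-algebra homomorphism A ⊗[R] Aᵐᵒᵖ → Module.End R A sending a ⊗ bᵐᵒᵖ to the map x ↦ a * x * b (Mathlib `AlgHom.mulLeftRight`, as in `IsAzumaya R A`) is bijective. If the unit map R → A admits an R-linear retraction, i.e. there is an R-linear map r : A →ₗ[R] R with r(1) = 1, then A is separable over R. -/
import Mathlib


open scoped TensorProduct

/-- Right multiplication as an `R`-algebra homomorphism `Aᵐᵒᵖ →ₐ[R] Module.End R A`. -/
def rmulAlgHom (R A : Type*) [CommRing R] [Ring A] [Algebra R A] :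
    Aᵐᵒᵖ →ₐ[R] Module.End R A where
  toFun b := LinearMap.mulRight R b.unop
  map_one' := by ext x; simp
  map_mul' b b' := by ext x; simp [mul_assoc]
  map_zero' := by ext x; simp
  map_add' b b' := by ext x; simp [mul_add]
  commutes' r := by
    ext x
    simp [Algebra.algebraMap_eq_smul_one, mul_smul_comm]

/-- The natural `R`-algebra homomorphism `A ⊗[R] Aᵐᵒᵖ →ₐ[R] Module.End R A`, sending
`a ⊗ bᵐᵒᵖ` to the endomorphism `x ↦ a * x * b` (as in `IsAzumaya`). -/
noncomputable def mulLeftRightAlgHom (R A : Type*) [CommRing R] [Ring A] [Algebra R A] :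
    A ⊗[R] Aᵐᵒᵖ →ₐ[R] Module.End R A :=
  Algebra.TensorProduct.lift (Algebra.lmul R A) (rmulAlgHom R A) fun a b => by
    apply LinearMap.ext
    intro x
    simp [rmulAlgHom, mul_assoc]

/-- An Azumaya `R`-algebra (faithful, finitely generated projective over `R`, with the
natural map `A ⊗[R] Aᵐᵒᵖ → Module.End R A` bijective) whose unit admits an `R`-linear
retraction is separable: it admits a separability idempotent. -/
theorem azumaya_separable_of_unit_retraction {R A : Type*} [CommRing R] [Ring A]
    [Algebra R A] [Module.Finite R A] [Module.Projective R A] [FaithfulSMul R A]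
    (hbij : Function.Bijective (mulLeftRightAlgHom R A))
    (r : A →ₗ[R] R) (hr : r 1 = 1) :
    ∃ e : A ⊗[R] A, LinearMap.mul' R A e = 1 ∧
      ∀ a : A, (a ⊗ₜ[R] (1 : A)) * e = e * ((1 : A) ⊗ₜ[R] a) := by
  classical
  -- the endomorphism `x ↦ algebraMap R A (r x)`
  set f : Module.End R A := (Algebra.linearMap R A).comp r with hf
  obtain ⟨e', he'⟩ := hbij.surjective f
  -- the map `A ⊗ Aᵐᵒᵖ → A ⊗ A` given by `unop` on the second factor
  set U : A ⊗[R] Aᵐᵒᵖ →ₗ[R] A ⊗[R] A :=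
    TensorProduct.map LinearMap.id ((MulOpposite.opLinearEquiv R).symm.toLinearMap) with hU
  have hUtmul : ∀ (x : A) (y : Aᵐᵒᵖ), U (x ⊗ₜ[R] y) = x ⊗ₜ[R] y.unop := fun x y => rfl
  refine ⟨U e', ?_, ?_⟩
  · have key : ∀ z : A ⊗[R] Aᵐᵒᵖ,
        LinearMap.mul' R A (U z) = mulLeftRightAlgHom R A z 1 := by
      intro z
      induction z using TensorProduct.induction_on with
      | zero => simp
      | tmul x y => simp [hUtmul, mulLeftRightAlgHom, rmulAlgHom]
      | add x y hx hy => simp only [map_add, LinearMap.add_apply, hx, hy]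
    rw [key, he', hf]
    simp [hr]
  · intro a
    have h1 : ∀ z : A ⊗[R] Aᵐᵒᵖ,
        (a ⊗ₜ[R] (1 : A)) * U z = U ((a ⊗ₜ[R] (1 : Aᵐᵒᵖ)) * z) := by
      intro z
      induction z using TensorProduct.induction_on with
      | zero => simp
      | tmul x y => simp [hUtmul, Algebra.TensorProduct.tmul_mul_tmul]
      | add x y hx hy => simp only [map_add, mul_add, add_mul, hx, hy]
    have h2 : ∀ z : A ⊗[R] Aᵐᵒᵖ,
        U z * ((1 : A) ⊗ₜ[R] a) = U (((1 : A) ⊗ₜ[R] MulOpposite.op a) * z) := by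
      intro z
      induction z using TensorProduct.induction_on with
      | zero => simp
      | tmul x y => simp [hUtmul, Algebra.TensorProduct.tmul_mul_tmul]
      | add x y hx hy => simp only [map_add, add_mul, mul_add, hx, hy]
    rw [h1, h2]
    congr 1
    apply hbij.injective
    rw [map_mul, map_mul, he']
    ext x
    simp [hf, mulLeftRightAlgHom, rmulAlgHom, Algebra.commutes]
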